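/- arXiv:quant-ph/0202093 — 2 statements merged into one kernel-verified Lean document; each statement's English description precedes it below -/
import Mathlib

section
/- If F is a first integral of a time-dependent Hamiltonian system (i.e., ∂_t F + {H, F}_V = 0 on V*Q), then its pull-back ζ*F is in involution with H* = p_0 + H on T*Q: {H*, ζ*F}_T = 0. -/
open scoped BigOperators

/-- Momentum phase space `V*Q`, coordinates `(t, qᵏ, pₖ)`. -/
abbrev VQ (m : ℕ) := ℝ × (Fin m → ℝ) × (Fin m → ℝ)

/-- Homogeneous momentum phase space `T*Q`, coordinates `(t, qᵏ, p₀, pₖ)`. -/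
abbrev TQ (m : ℕ) := ℝ × (Fin m → ℝ) × ℝ × (Fin m → ℝ)

/-- Vertical Poisson bracket on `V*Q`. -/
noncomputable def bracketV {m : ℕ} (f g : VQ m → ℝ) (x : VQ m) : ℝ :=
  ∑ k : Fin m,
    (fderiv ℝ f x (0, 0, Pi.single k 1) * fderiv ℝ g x (0, Pi.single k 1, 0)
      - fderiv ℝ f x (0, Pi.single k 1, 0) * fderiv ℝ g x (0, 0, Pi.single k 1))

/-- Canonical Poisson bracket on `T*Q`. -/
noncomputable def bracketT {m : ℕ} (f g : TQ m → ℝ) (x : TQ m) : ℝ :=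
  (fderiv ℝ f x (0, 0, 1, 0) * fderiv ℝ g x (1, 0, 0, 0)
    - fderiv ℝ f x (1, 0, 0, 0) * fderiv ℝ g x (0, 0, 1, 0))
  + ∑ k : Fin m,
    (fderiv ℝ f x (0, 0, 0, Pi.single k 1) * fderiv ℝ g x (0, Pi.single k 1, 0, 0)
      - fderiv ℝ f x (0, Pi.single k 1, 0, 0) * fderiv ℝ g x (0, 0, 0, Pi.single k 1))

/-- `ζ : T*Q → V*Q`. -/
def zeta {m : ℕ} (x : TQ m) : VQ m := (x.1, x.2.1, x.2.2.2)

/-- `H* = p₀ + H`. -/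
noncomputable def Hstar {m : ℕ} (H : VQ m → ℝ) (x : TQ m) : ℝ := x.2.2.1 + H (zeta x)

/-- `ζ` as a continuous linear map. -/
noncomputable def zetaL (m : ℕ) : TQ m →L[ℝ] VQ m :=
  (ContinuousLinearMap.fst ℝ ℝ _).prod
    (((ContinuousLinearMap.fst ℝ (Fin m → ℝ) _).comp (ContinuousLinearMap.snd ℝ ℝ _)).prod
     (((ContinuousLinearMap.snd ℝ ℝ _).comp (ContinuousLinearMap.snd ℝ (Fin m → ℝ) _)).comp
       (ContinuousLinearMap.snd ℝ ℝ _)))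

/-- `p₀` as a continuous linear map. -/
noncomputable def p0L (m : ℕ) : TQ m →L[ℝ] ℝ :=
  (ContinuousLinearMap.fst ℝ ℝ (Fin m → ℝ)).comp
    ((ContinuousLinearMap.snd ℝ (Fin m → ℝ) _).comp (ContinuousLinearMap.snd ℝ ℝ _))

/-- If `F` is a first integral of the time-dependent Hamiltonian system, i.e.
`∂ₜF + {H, F}_V = 0` on `V*Q`, then `ζ*F` is in involution with `H* = p₀ + H`:
`{H*, ζ*F}_T = 0`. -/
theorem first_integral_involutive_with_Hstar {m : ℕ}
    (H F : VQ m → ℝ) (hH : ContDiff ℝ (⊤ : ℕ∞) H) (hF : ContDiff ℝ (⊤ : ℕ∞) F)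
    (hfirst : ∀ y : VQ m, fderiv ℝ F y (1, 0, 0) + bracketV H F y = 0) :
    ∀ x : TQ m, bracketT (Hstar H) (F ∘ zeta) x = 0 := by
  intro x
  have hHd : Differentiable ℝ H := hH.differentiable (by simp)
  have hFd : Differentiable ℝ F := hF.differentiable (by simp)
  have hz : Differentiable ℝ (⇑(zetaL m)) := (zetaL m).differentiable
  have hFz : ∀ v : TQ m, fderiv ℝ (F ∘ zeta) x v = fderiv ℝ F (zeta x) (zeta v) := by
    intro v
    have h : F ∘ zeta = F ∘ ⇑(zetaL m) := rfl
    rw [h, fderiv_comp (x := x) (hFd _) ((zetaL m).differentiableAt), (zetaL m).fderiv]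
    rfl
  have hHs : ∀ v : TQ m, fderiv ℝ (Hstar H) x v = p0L m v + fderiv ℝ H (zeta x) (zeta v) := by
    intro v
    have h : Hstar H = fun y => p0L m y + (H ∘ ⇑(zetaL m)) y := rfl
    rw [h, fderiv_fun_add ((p0L m).differentiableAt) ((hHd.comp hz) x)]
    have h2 : fderiv ℝ (fun y => (H ∘ ⇑(zetaL m)) y) x v
        = fderiv ℝ H (zeta x) (zeta v) := by
      rw [show (fun y => (H ∘ ⇑(zetaL m)) y) = H ∘ ⇑(zetaL m) from rfl,
        fderiv_comp (x := x) (hHd _) ((zetaL m).differentiableAt), (zetaL m).fderiv]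
      rfl
    rw [ContinuousLinearMap.add_apply, (p0L m).fderiv, h2]
  have hF0 : fderiv ℝ F (zeta x) ((0 : ℝ), (0 : Fin m → ℝ), (0 : Fin m → ℝ)) = 0 :=
    map_zero _
  have hH0 : fderiv ℝ H (zeta x) ((0 : ℝ), (0 : Fin m → ℝ), (0 : Fin m → ℝ)) = 0 :=
    map_zero _
  have key := hfirst (zeta x)
  rw [bracketV] at key
  rw [bracketT]
  have z1 : zeta ((1:ℝ), (0:Fin m → ℝ), (0:ℝ), (0:Fin m → ℝ))
      = ((1:ℝ), (0:Fin m → ℝ), (0:Fin m → ℝ)) := rfl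
  have z2 : zeta ((0:ℝ), (0:Fin m → ℝ), (1:ℝ), (0:Fin m → ℝ))
      = ((0:ℝ), (0:Fin m → ℝ), (0:Fin m → ℝ)) := rfl
  have zq : ∀ k : Fin m, zeta ((0:ℝ), Pi.single k 1, (0:ℝ), (0:Fin m → ℝ))
      = ((0:ℝ), Pi.single k 1, (0:Fin m → ℝ)) := fun _ => rfl
  have zp : ∀ k : Fin m, zeta ((0:ℝ), (0:Fin m → ℝ), (0:ℝ), Pi.single k 1)
      = ((0:ℝ), (0:Fin m → ℝ), Pi.single k 1) := fun _ => rfl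
  have p1 : p0L m ((1:ℝ), (0:Fin m → ℝ), (0:ℝ), (0:Fin m → ℝ)) = 0 := rfl
  have p2 : p0L m ((0:ℝ), (0:Fin m → ℝ), (1:ℝ), (0:Fin m → ℝ)) = 1 := rfl
  have pq : ∀ k : Fin m, p0L m ((0:ℝ), Pi.single k 1, (0:ℝ), (0:Fin m → ℝ)) = 0 := fun _ => rfl
  have pp : ∀ k : Fin m, p0L m ((0:ℝ), (0:Fin m → ℝ), (0:ℝ), Pi.single k 1) = 0 := fun _ => rfl
  simp only [hHs, hFz, z1, z2, zq, zp, p1, p2, pq, pp, hF0, hH0, one_mul, mul_zero,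
    zero_add, add_zero, sub_zero, zero_mul]
  linarith
end

section
/- The quantization map sending the affine function f = a^k(φ) I_k + b(φ) to the operator f̂ = −i a^k ∂_k − (i/2) ∂_k a^k − a^k λ_k + b on smooth complex functions on T^m satisfies the Dirac condition [f̂, f̂'] = −i (\widehat{\{f, f'\}}), where {f,f'} is the Poisson bracket on P = V × T^m with symplectic form dI_k ∧ dφ^k. -/
open scoped BigOperators

/-- `P = V × T^m` with coordinates `(φ, I)`. -/
abbrev Pann (m : ℕ) := (Fin m → ℝ) × (Fin m → ℝ)

/-- Poisson bracket `{f,f'} = ∂ᵏf ∂ₖf' − ∂ₖf ∂ᵏf'`. -/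
noncomputable def bracketP {m : ℕ} (f g : Pann m → ℝ) (x : Pann m) : ℝ :=
  ∑ k : Fin m,
    (fderiv ℝ f x (0, Pi.single k 1) * fderiv ℝ g x (Pi.single k 1, 0)
      - fderiv ℝ f x (Pi.single k 1, 0) * fderiv ℝ g x (0, Pi.single k 1))

/-- `f = aᵏ(φ) Iₖ + b(φ)`. -/
def affineAction {m : ℕ} (a : (Fin m → ℝ) → Fin m → ℝ) (b : (Fin m → ℝ) → ℝ)
    (x : Pann m) : ℝ :=
  (∑ k, a x.1 k * x.2 k) + b x.1

/-- Partial derivative `∂ₖ` of a complex function on the torus. -/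
noncomputable def pdC {m : ℕ} (k : Fin m) (ρ : (Fin m → ℝ) → ℂ) (φ : Fin m → ℝ) : ℂ :=
  fderiv ℝ ρ φ (Pi.single k 1)

/-- Partial derivative `∂ₖ` of a real function on the torus. -/
noncomputable def pdR {m : ℕ} (k : Fin m) (c : (Fin m → ℝ) → ℝ) (φ : Fin m → ℝ) : ℝ :=
  fderiv ℝ c φ (Pi.single k 1)

/-- The quantization `f̂ = −i aᵏ ∂ₖ − (i/2) ∂ₖaᵏ − aᵏ λₖ + b` of `f = aᵏ(φ)Iₖ + b(φ)`. -/
noncomputable def Qop {m : ℕ} (lam : Fin m → ℝ)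
    (a : (Fin m → ℝ) → Fin m → ℝ) (b : (Fin m → ℝ) → ℝ)
    (ρ : (Fin m → ℝ) → ℂ) : (Fin m → ℝ) → ℂ := fun φ =>
  (∑ k, -Complex.I * (a φ k : ℂ) * pdC k ρ φ)
    - (Complex.I / 2) * ((∑ k, pdR k (fun ψ => a ψ k) φ : ℝ) : ℂ) * ρ φ
    - ((∑ k, a φ k * lam k : ℝ) : ℂ) * ρ φ + (b φ : ℂ) * ρ φ

/-- `2π`-periodicity in each angle. -/
def OnTorus {m : ℕ} {α : Type*} (c : (Fin m → ℝ) → α) : Prop :=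
  ∀ (φ : Fin m → ℝ) (j : Fin m), c (φ + (2 * Real.pi) • (Pi.single j 1 : Fin m → ℝ)) = c φ

section Aux

variable {m : ℕ}

lemma cd_coord {a : (Fin m → ℝ) → Fin m → ℝ} (ha : ContDiff ℝ (⊤ : ℕ∞) a) (k : Fin m) :
    ContDiff ℝ (⊤ : ℕ∞) (fun φ => a φ k) :=
  (ContinuousLinearMap.proj k : (Fin m → ℝ) →L[ℝ] ℝ).contDiff.comp ha

lemma hasFD_affine (a : (Fin m → ℝ) → Fin m → ℝ) (b : (Fin m → ℝ) → ℝ)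
    (ha : ContDiff ℝ (⊤ : ℕ∞) a) (hb : ContDiff ℝ (⊤ : ℕ∞) b) (x : Pann m) :
    HasFDerivAt (affineAction a b)
      ((∑ k : Fin m, ((a x.1 k) • ((ContinuousLinearMap.proj k).comp
          (ContinuousLinearMap.snd ℝ (Fin m → ℝ) (Fin m → ℝ)))
        + (x.2 k) • ((fderiv ℝ (fun φ => a φ k) x.1).comp
          (ContinuousLinearMap.fst ℝ (Fin m → ℝ) (Fin m → ℝ)))))
        + (fderiv ℝ b x.1).comp (ContinuousLinearMap.fst ℝ (Fin m → ℝ) (Fin m → ℝ))) x := by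
  apply HasFDerivAt.add
  · apply HasFDerivAt.fun_sum
    intro k _
    have hu : HasFDerivAt (fun y : Pann m => a y.1 k)
        ((fderiv ℝ (fun φ => a φ k) x.1).comp
          (ContinuousLinearMap.fst ℝ (Fin m → ℝ) (Fin m → ℝ))) x :=
      (((cd_coord ha k).differentiable (by simp) x.1).hasFDerivAt).comp x (hasFDerivAt_fst)
    have hv : HasFDerivAt (fun y : Pann m => y.2 k)
        ((ContinuousLinearMap.proj k).comp
          (ContinuousLinearMap.snd ℝ (Fin m → ℝ) (Fin m → ℝ))) x :=
      ((ContinuousLinearMap.proj k).comp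
          (ContinuousLinearMap.snd ℝ (Fin m → ℝ) (Fin m → ℝ))).hasFDerivAt
    exact hu.mul hv
  · exact ((hb.differentiable (by simp) x.1).hasFDerivAt).comp x (hasFDerivAt_fst)

lemma fd_affine_I (a : (Fin m → ℝ) → Fin m → ℝ) (b : (Fin m → ℝ) → ℝ)
    (ha : ContDiff ℝ (⊤ : ℕ∞) a) (hb : ContDiff ℝ (⊤ : ℕ∞) b) (x : Pann m) (r : Fin m) :
    fderiv ℝ (affineAction a b) x
      ((0 : Fin m → ℝ), (Pi.single r 1 : Fin m → ℝ)) = a x.1 r := by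
  rw [(hasFD_affine a b ha hb x).fderiv]
  simp only [ContinuousLinearMap.add_apply, ContinuousLinearMap.coe_sum', Finset.sum_apply,
    ContinuousLinearMap.add_apply, ContinuousLinearMap.coe_smul', Pi.smul_apply,
    ContinuousLinearMap.coe_comp', Function.comp_apply,
    ContinuousLinearMap.coe_fst', ContinuousLinearMap.coe_snd',
    ContinuousLinearMap.proj_apply, map_zero, smul_eq_mul, mul_zero, add_zero, zero_add]
  rw [Finset.sum_eq_single r]
  · simp
  · intro k _ hk; simp [Pi.single_apply, hk]
  · simp

lemma fd_affine_phi (a : (Fin m → ℝ) → Fin m → ℝ) (b : (Fin m → ℝ) → ℝ)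
    (ha : ContDiff ℝ (⊤ : ℕ∞) a) (hb : ContDiff ℝ (⊤ : ℕ∞) b) (x : Pann m) (r : Fin m) :
    fderiv ℝ (affineAction a b) x
      ((Pi.single r 1 : Fin m → ℝ), (0 : Fin m → ℝ)) =
      (∑ k, pdR r (fun φ => a φ k) x.1 * x.2 k) + pdR r b x.1 := by
  rw [(hasFD_affine a b ha hb x).fderiv]
  simp only [ContinuousLinearMap.add_apply, ContinuousLinearMap.coe_sum', Finset.sum_apply,
    ContinuousLinearMap.coe_smul', Pi.smul_apply,
    ContinuousLinearMap.coe_comp', Function.comp_apply,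
    ContinuousLinearMap.coe_fst', ContinuousLinearMap.coe_snd',
    ContinuousLinearMap.proj_apply, map_zero, smul_eq_mul, mul_zero, add_zero, zero_add,
    Pi.zero_apply, Pi.single_eq_same, pdR]
  congr 1
  apply Finset.sum_congr rfl
  intro k _
  ring

-- pdC / pdR calculus

lemma cd_pdC {ρ : (Fin m → ℝ) → ℂ} (hρ : ContDiff ℝ (⊤ : ℕ∞) ρ) (k : Fin m) :
    ContDiff ℝ (⊤ : ℕ∞) (pdC k ρ) :=
  (ContinuousLinearMap.apply ℝ ℂ (Pi.single k 1 : Fin m → ℝ)).contDiff.comp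
    (hρ.fderiv_right (by simp))

lemma cd_pdR {c : (Fin m → ℝ) → ℝ} (hc : ContDiff ℝ (⊤ : ℕ∞) c) (k : Fin m) :
    ContDiff ℝ (⊤ : ℕ∞) (pdR k c) :=
  (ContinuousLinearMap.apply ℝ ℝ (Pi.single k 1 : Fin m → ℝ)).contDiff.comp
    (hc.fderiv_right (by simp))

lemma cdC_cast {c : (Fin m → ℝ) → ℝ} (hc : ContDiff ℝ (⊤ : ℕ∞) c) :
    ContDiff ℝ (⊤ : ℕ∞) (fun ψ => ((c ψ : ℝ) : ℂ)) :=
  Complex.ofRealCLM.contDiff.comp hc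

lemma pdC_ofReal {c : (Fin m → ℝ) → ℝ} {φ : Fin m → ℝ}
    (hc : DifferentiableAt ℝ c φ) (k : Fin m) :
    pdC k (fun ψ => ((c ψ : ℝ) : ℂ)) φ = ((pdR k c φ : ℝ) : ℂ) := by
  unfold pdC pdR
  have h : HasFDerivAt (fun ψ => ((c ψ : ℝ) : ℂ))
      (Complex.ofRealCLM.comp (fderiv ℝ c φ)) φ :=
    Complex.ofRealCLM.hasFDerivAt.comp φ hc.hasFDerivAt
  rw [h.fderiv]
  simp

lemma pdC_mul {u v : (Fin m → ℝ) → ℂ} {φ : Fin m → ℝ}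
    (hu : DifferentiableAt ℝ u φ) (hv : DifferentiableAt ℝ v φ) (k : Fin m) :
    pdC k (fun ψ => u ψ * v ψ) φ = pdC k u φ * v φ + u φ * pdC k v φ := by
  unfold pdC
  rw [fderiv_fun_mul hu hv]
  simp [smul_eq_mul]; ring

lemma pdC_const_mul {v : (Fin m → ℝ) → ℂ} {φ : Fin m → ℝ} (c : ℂ)
    (hv : DifferentiableAt ℝ v φ) (k : Fin m) :
    pdC k (fun ψ => c * v ψ) φ = c * pdC k v φ := by
  unfold pdC
  rw [fderiv_const_mul hv]
  simp

lemma pdC_add {u v : (Fin m → ℝ) → ℂ} {φ : Fin m → ℝ}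
    (hu : DifferentiableAt ℝ u φ) (hv : DifferentiableAt ℝ v φ) (k : Fin m) :
    pdC k (fun ψ => u ψ + v ψ) φ = pdC k u φ + pdC k v φ := by
  unfold pdC
  rw [fderiv_fun_add hu hv]; simp

lemma pdC_sub {u v : (Fin m → ℝ) → ℂ} {φ : Fin m → ℝ}
    (hu : DifferentiableAt ℝ u φ) (hv : DifferentiableAt ℝ v φ) (k : Fin m) :
    pdC k (fun ψ => u ψ - v ψ) φ = pdC k u φ - pdC k v φ := by
  unfold pdC
  rw [fderiv_fun_sub hu hv]; simp

lemma pdC_sum {ι : Type*} {s : Finset ι} {F : ι → (Fin m → ℝ) → ℂ} {φ : Fin m → ℝ}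
    (hF : ∀ i ∈ s, DifferentiableAt ℝ (F i) φ) (k : Fin m) :
    pdC k (fun ψ => ∑ i ∈ s, F i ψ) φ = ∑ i ∈ s, pdC k (F i) φ := by
  unfold pdC
  rw [fderiv_fun_sum hF]
  simp

lemma pdR_sum {ι : Type*} {s : Finset ι} {F : ι → (Fin m → ℝ) → ℝ} {φ : Fin m → ℝ}
    (hF : ∀ i ∈ s, DifferentiableAt ℝ (F i) φ) (k : Fin m) :
    pdR k (fun ψ => ∑ i ∈ s, F i ψ) φ = ∑ i ∈ s, pdR k (F i) φ := by
  unfold pdR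
  rw [fderiv_fun_sum hF]
  simp

lemma pdR_mul {u v : (Fin m → ℝ) → ℝ} {φ : Fin m → ℝ}
    (hu : DifferentiableAt ℝ u φ) (hv : DifferentiableAt ℝ v φ) (k : Fin m) :
    pdR k (fun ψ => u ψ * v ψ) φ = pdR k u φ * v φ + u φ * pdR k v φ := by
  unfold pdR
  rw [fderiv_fun_mul hu hv]
  simp [smul_eq_mul]; ring

lemma pdR_sub {u v : (Fin m → ℝ) → ℝ} {φ : Fin m → ℝ}
    (hu : DifferentiableAt ℝ u φ) (hv : DifferentiableAt ℝ v φ) (k : Fin m) :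
    pdR k (fun ψ => u ψ - v ψ) φ = pdR k u φ - pdR k v φ := by
  unfold pdR
  rw [fderiv_fun_sub hu hv]; simp

lemma pdR_mul_const {u : (Fin m → ℝ) → ℝ} {φ : Fin m → ℝ} (r : ℝ)
    (hu : DifferentiableAt ℝ u φ) (k : Fin m) :
    pdR k (fun ψ => u ψ * r) φ = pdR k u φ * r := by
  unfold pdR
  rw [fderiv_mul_const hu]
  simp [mul_comm]

lemma pdC_comm {ρ : (Fin m → ℝ) → ℂ} (hρ : ContDiff ℝ (⊤ : ℕ∞) ρ) (k r : Fin m) (φ : Fin m → ℝ) :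
    pdC k (pdC r ρ) φ = pdC r (pdC k ρ) φ := by
  have h1 : ∀ y, HasFDerivAt ρ (fderiv ℝ ρ y) y :=
    fun y => (hρ.differentiable (by simp) y).hasFDerivAt
  have h2 : HasFDerivAt (fderiv ℝ ρ) (fderiv ℝ (fderiv ℝ ρ) φ) φ :=
    (((hρ.fderiv_right (m := (⊤ : ℕ∞)) (by simp)).differentiable (by simp)) φ).hasFDerivAt
  have sym := second_derivative_symmetric h1 h2
  have key : ∀ v w : Fin m → ℝ,
      fderiv ℝ (fun ψ => fderiv ℝ ρ ψ v) φ w = fderiv ℝ (fderiv ℝ ρ) φ w v := by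
    intro v w
    have : HasFDerivAt (fun ψ => fderiv ℝ ρ ψ v)
        ((ContinuousLinearMap.apply ℝ ℂ v).comp (fderiv ℝ (fderiv ℝ ρ) φ)) φ :=
      (ContinuousLinearMap.apply ℝ ℂ v).hasFDerivAt.comp φ h2
    rw [this.fderiv]; rfl
  unfold pdC
  rw [key, key, sym]

lemma pdR_comm {c : (Fin m → ℝ) → ℝ} (hc : ContDiff ℝ (⊤ : ℕ∞) c) (k r : Fin m) (φ : Fin m → ℝ) :
    pdR k (pdR r c) φ = pdR r (pdR k c) φ := by
  have h1 : ∀ y, HasFDerivAt c (fderiv ℝ c y) y :=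
    fun y => (hc.differentiable (by simp) y).hasFDerivAt
  have h2 : HasFDerivAt (fderiv ℝ c) (fderiv ℝ (fderiv ℝ c) φ) φ :=
    (((hc.fderiv_right (m := (⊤ : ℕ∞)) (by simp)).differentiable (by simp)) φ).hasFDerivAt
  have sym := second_derivative_symmetric h1 h2
  have key : ∀ v w : Fin m → ℝ,
      fderiv ℝ (fun ψ => fderiv ℝ c ψ v) φ w = fderiv ℝ (fderiv ℝ c) φ w v := by
    intro v w
    have : HasFDerivAt (fun ψ => fderiv ℝ c ψ v)
        ((ContinuousLinearMap.apply ℝ ℝ v).comp (fderiv ℝ (fderiv ℝ c) φ)) φ :=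
      (ContinuousLinearMap.apply ℝ ℝ v).hasFDerivAt.comp φ h2
    rw [this.fderiv]; rfl
  unfold pdR
  rw [key, key, sym]

/-- abstract first order operator -/
noncomputable def Lop (w : Fin m → (Fin m → ℝ) → ℂ) (c : (Fin m → ℝ) → ℂ)
    (ρ : (Fin m → ℝ) → ℂ) : (Fin m → ℝ) → ℂ := fun φ =>
  (∑ k, w k φ * pdC k ρ φ) + c φ * ρ φ

lemma pd_Lop {w : Fin m → (Fin m → ℝ) → ℂ} {c ρ : (Fin m → ℝ) → ℂ}
    (hw : ∀ k, ContDiff ℝ (⊤ : ℕ∞) (w k)) (hc : ContDiff ℝ (⊤ : ℕ∞) c) (hρ : ContDiff ℝ (⊤ : ℕ∞) ρ)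
    (j : Fin m) (φ : Fin m → ℝ) :
    pdC j (Lop w c ρ) φ
      = (∑ k, (pdC j (w k) φ * pdC k ρ φ + w k φ * pdC j (pdC k ρ) φ))
        + (pdC j c φ * ρ φ + c φ * pdC j ρ φ) := by
  have dstep : ∀ k : Fin m, DifferentiableAt ℝ (fun ψ => w k ψ * pdC k ρ ψ) φ :=
    fun k => (((hw k).mul (cd_pdC hρ k)).differentiable (by simp) φ)
  have hsum : DifferentiableAt ℝ (fun ψ => ∑ k, w k ψ * pdC k ρ ψ) φ :=
    ((ContDiff.sum fun k _ => (hw k).mul (cd_pdC hρ k)).differentiable (by simp) φ)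
  have hcρ : DifferentiableAt ℝ (fun ψ => c ψ * ρ ψ) φ :=
    ((hc.mul hρ).differentiable (by simp) φ)
  unfold Lop
  rw [pdC_add hsum hcρ, pdC_sum (fun k _ => dstep k),
      pdC_mul ((hc.differentiable (by simp)) φ) ((hρ.differentiable (by simp)) φ)]
  congr 1
  apply Finset.sum_congr rfl
  intro k _
  exact pdC_mul ((hw k).differentiable (by simp) φ) ((cd_pdC hρ k).differentiable (by simp) φ) j

lemma comm_op {w w' : Fin m → (Fin m → ℝ) → ℂ} {c c' ρ : (Fin m → ℝ) → ℂ}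
    (hw : ∀ k, ContDiff ℝ (⊤ : ℕ∞) (w k)) (hc : ContDiff ℝ (⊤ : ℕ∞) c)
    (hw' : ∀ k, ContDiff ℝ (⊤ : ℕ∞) (w' k)) (hc' : ContDiff ℝ (⊤ : ℕ∞) c')
    (hρ : ContDiff ℝ (⊤ : ℕ∞) ρ) (φ : Fin m → ℝ) :
    Lop w c (Lop w' c' ρ) φ - Lop w' c' (Lop w c ρ) φ
      = (∑ r, (∑ k, (w k φ * pdC k (w' r) φ - w' k φ * pdC k (w r) φ)) * pdC r ρ φ)
        + (∑ k, (w k φ * pdC k c' φ - w' k φ * pdC k c φ)) * ρ φ := by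
  have expand : ∀ (w1 w2 : Fin m → (Fin m → ℝ) → ℂ) (c1 c2 : (Fin m → ℝ) → ℂ),
      (∀ k, ContDiff ℝ (⊤ : ℕ∞) (w1 k)) → ContDiff ℝ (⊤ : ℕ∞) c1 →
      (∀ k, ContDiff ℝ (⊤ : ℕ∞) (w2 k)) → ContDiff ℝ (⊤ : ℕ∞) c2 →
      Lop w1 c1 (Lop w2 c2 ρ) φ
        = (∑ j, ∑ k, (w1 j φ * (pdC j (w2 k) φ * pdC k ρ φ)
            + w1 j φ * (w2 k φ * pdC j (pdC k ρ) φ)))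
          + (∑ j, (w1 j φ * pdC j c2 φ)) * ρ φ
          + c2 φ * (∑ j, w1 j φ * pdC j ρ φ)
          + c1 φ * (∑ k, w2 k φ * pdC k ρ φ)
          + c1 φ * (c2 φ * ρ φ) := by
    intro w1 w2 c1 c2 hw1 hc1 hw2 hc2
    show (∑ j, w1 j φ * pdC j (Lop w2 c2 ρ) φ) + c1 φ * (Lop w2 c2 ρ φ) = _
    have e1 : ∀ j, w1 j φ * pdC j (Lop w2 c2 ρ) φ
        = (∑ k, (w1 j φ * (pdC j (w2 k) φ * pdC k ρ φ)
            + w1 j φ * (w2 k φ * pdC j (pdC k ρ) φ)))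
          + (w1 j φ * pdC j c2 φ) * ρ φ + c2 φ * (w1 j φ * pdC j ρ φ) := by
      intro j
      rw [pd_Lop hw2 hc2 hρ j φ]
      rw [mul_add, Finset.mul_sum]
      have : ∀ k, w1 j φ * (pdC j (w2 k) φ * pdC k ρ φ + w2 k φ * pdC j (pdC k ρ) φ)
          = w1 j φ * (pdC j (w2 k) φ * pdC k ρ φ) + w1 j φ * (w2 k φ * pdC j (pdC k ρ) φ) := by
        intro k; ring
      rw [Finset.sum_congr rfl fun k _ => this k]
      ring
    rw [Finset.sum_congr rfl fun j _ => e1 j]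
    rw [Finset.sum_add_distrib, Finset.sum_add_distrib, ← Finset.sum_mul, ← Finset.mul_sum]
    show _ + c1 φ * ((∑ k, w2 k φ * pdC k ρ φ) + c2 φ * ρ φ) = _
    ring
  rw [expand w w' c c' hw hc hw' hc', expand w' w c' c hw' hc' hw hc]
  have hDD : ∑ j, ∑ k, (w j φ * (w' k φ * pdC j (pdC k ρ) φ))
      = ∑ j, ∑ k, (w' j φ * (w k φ * pdC j (pdC k ρ) φ)) := by
    rw [Finset.sum_comm]
    exact Finset.sum_congr rfl fun j _ => Finset.sum_congr rfl fun k _ => by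
      rw [pdC_comm hρ]; ring
  have hFO : ∑ r, (∑ k, (w k φ * pdC k (w' r) φ - w' k φ * pdC k (w r) φ)) * pdC r ρ φ
      = (∑ j, ∑ k, (w j φ * (pdC j (w' k) φ * pdC k ρ φ)))
        - (∑ j, ∑ k, (w' j φ * (pdC j (w k) φ * pdC k ρ φ))) := by
    have step1 : ∀ r : Fin m, (∑ k, (w k φ * pdC k (w' r) φ - w' k φ * pdC k (w r) φ)) * pdC r ρ φ
        = (∑ k, (w k φ * (pdC k (w' r) φ * pdC r ρ φ)))
          - (∑ k, (w' k φ * (pdC k (w r) φ * pdC r ρ φ))) := by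
      intro r
      rw [← Finset.sum_sub_distrib, Finset.sum_mul]
      exact Finset.sum_congr rfl fun k _ => by ring
    rw [Finset.sum_congr rfl fun r _ => step1 r, Finset.sum_sub_distrib,
        Finset.sum_comm (f := fun r k => w k φ * (pdC k (w' r) φ * pdC r ρ φ)),
        Finset.sum_comm (f := fun r k => w' k φ * (pdC k (w r) φ * pdC r ρ φ))]
  have hsplit : ∀ (w1 w2 : Fin m → (Fin m → ℝ) → ℂ),
      ∑ j, ∑ k, (w1 j φ * (pdC j (w2 k) φ * pdC k ρ φ)
            + w1 j φ * (w2 k φ * pdC j (pdC k ρ) φ))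
        = (∑ j, ∑ k, (w1 j φ * (pdC j (w2 k) φ * pdC k ρ φ)))
          + ∑ j, ∑ k, (w1 j φ * (w2 k φ * pdC j (pdC k ρ) φ)) := by
    intro w1 w2
    rw [← Finset.sum_add_distrib]
    exact Finset.sum_congr rfl fun j _ => by rw [Finset.sum_add_distrib]
  rw [hsplit w w', hsplit w' w, hFO]
  have hZ : (∑ j, (w j φ * pdC j c' φ - w' j φ * pdC j c φ)) * ρ φ
      = (∑ j, (w j φ * pdC j c' φ)) * ρ φ - (∑ j, (w' j φ * pdC j c φ)) * ρ φ := by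
    rw [Finset.sum_sub_distrib]; ring
  rw [hZ]
  linear_combination hDD

lemma scalarE3 {m : ℕ} (u v p q lr : Fin m → ℂ) (e d n n' : Fin m → Fin m → ℂ) :
    ∑ k, (((-Complex.I) * u k) * (-(Complex.I/2) * (∑ r, n' k r) - (∑ r, d k r * lr r) + q k)
      - ((-Complex.I) * v k) * (-(Complex.I/2) * (∑ r, n k r) - (∑ r, e k r * lr r) + p k))
    = -Complex.I * (-(Complex.I/2) * (∑ r, ∑ k,
          (e r k * d k r + u k * n' k r - d r k * e k r - v k * n k r))
        - (∑ r, (∑ k, (u k * d k r - v k * e k r)) * lr r)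
        + (∑ k, (u k * q k - v k * p k))) := by
  have asym : ∑ r, ∑ k, (e r k * d k r) = ∑ r, ∑ k, (d r k * e k r) := by
    rw [Finset.sum_comm]
    exact Finset.sum_congr rfl fun _ _ => Finset.sum_congr rfl fun _ _ => mul_comm _ _
  have r1 : ∑ r, ∑ k, (e r k * d k r + u k * n' k r - d r k * e k r - v k * n k r)
      = (∑ k, u k * ∑ r, n' k r) - (∑ k, v k * ∑ r, n k r) := by
    have h : ∀ r : Fin m, ∑ k, (e r k * d k r + u k * n' k r - d r k * e k r - v k * n k r)
        = (∑ k, e r k * d k r) + (∑ k, u k * n' k r)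
          - (∑ k, d r k * e k r) - (∑ k, v k * n k r) := by
      intro r
      simp only [Finset.sum_add_distrib, Finset.sum_sub_distrib]
    rw [Finset.sum_congr rfl fun r _ => h r]
    simp only [Finset.sum_add_distrib, Finset.sum_sub_distrib]
    rw [Finset.sum_comm (f := fun r k => u k * n' k r),
        Finset.sum_comm (f := fun r k => v k * n k r)]
    have f1 : ∑ k, ∑ r, u k * n' k r = ∑ k, u k * ∑ r, n' k r :=
      Finset.sum_congr rfl fun k _ => (Finset.mul_sum _ _ _).symm
    have f2 : ∑ k, ∑ r, v k * n k r = ∑ k, v k * ∑ r, n k r :=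
      Finset.sum_congr rfl fun k _ => (Finset.mul_sum _ _ _).symm
    rw [f1, f2]
    linear_combination asym
  have r2 : ∑ r, (∑ k, (u k * d k r - v k * e k r)) * lr r
      = (∑ k, u k * ∑ r, d k r * lr r) - (∑ k, v k * ∑ r, e k r * lr r) := by
    have h : ∀ r : Fin m, (∑ k, (u k * d k r - v k * e k r)) * lr r
        = (∑ k, u k * (d k r * lr r)) - (∑ k, v k * (e k r * lr r)) := by
      intro r
      rw [← Finset.sum_sub_distrib, Finset.sum_mul]
      exact Finset.sum_congr rfl fun k _ => by ring
    rw [Finset.sum_congr rfl fun r _ => h r, Finset.sum_sub_distrib,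
        Finset.sum_comm (f := fun r k => u k * (d k r * lr r)),
        Finset.sum_comm (f := fun r k => v k * (e k r * lr r))]
    have f1 : ∑ k, ∑ r, u k * (d k r * lr r) = ∑ k, u k * ∑ r, d k r * lr r :=
      Finset.sum_congr rfl fun k _ => (Finset.mul_sum _ _ _).symm
    have f2 : ∑ k, ∑ r, v k * (e k r * lr r) = ∑ k, v k * ∑ r, e k r * lr r :=
      Finset.sum_congr rfl fun k _ => (Finset.mul_sum _ _ _).symm
    rw [f1, f2]
  have r3 : ∑ k, (u k * q k - v k * p k) = (∑ k, u k * q k) - (∑ k, v k * p k) :=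
    Finset.sum_sub_distrib _ _
  have l1 : ∑ k, (((-Complex.I) * u k) * (-(Complex.I/2) * (∑ r, n' k r) - (∑ r, d k r * lr r) + q k)
      - ((-Complex.I) * v k) * (-(Complex.I/2) * (∑ r, n k r) - (∑ r, e k r * lr r) + p k))
      = (Complex.I^2/2) * (∑ k, u k * ∑ r, n' k r)
        + Complex.I * (∑ k, u k * ∑ r, d k r * lr r)
        - Complex.I * (∑ k, u k * q k)
        - (Complex.I^2/2) * (∑ k, v k * ∑ r, n k r)
        - Complex.I * (∑ k, v k * ∑ r, e k r * lr r)
        + Complex.I * (∑ k, v k * p k) := by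
    have h : ∀ k : Fin m,
        (((-Complex.I) * u k) * (-(Complex.I/2) * (∑ r, n' k r) - (∑ r, d k r * lr r) + q k)
          - ((-Complex.I) * v k) * (-(Complex.I/2) * (∑ r, n k r) - (∑ r, e k r * lr r) + p k))
        = (Complex.I^2/2) * (u k * ∑ r, n' k r)
          + Complex.I * (u k * ∑ r, d k r * lr r)
          - Complex.I * (u k * q k)
          - (Complex.I^2/2) * (v k * ∑ r, n k r)
          - Complex.I * (v k * ∑ r, e k r * lr r)
          + Complex.I * (v k * p k) := by
      intro k; ring
    rw [Finset.sum_congr rfl fun k _ => h k]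
    simp only [Finset.sum_add_distrib, Finset.sum_sub_distrib, ← Finset.mul_sum]
  rw [l1, r1, r2, r3]
  ring

lemma scalarE3' {m : ℕ} (u v p q lr : Fin m → ℝ) (e d n n' : Fin m → Fin m → ℝ) :
    ∑ k, ((-Complex.I * ((u k : ℝ) : ℂ))
        * (-(Complex.I/2) * ((∑ r, n' k r : ℝ) : ℂ) - ((∑ r, d k r * lr r : ℝ) : ℂ)
            + ((q k : ℝ) : ℂ))
      - (-Complex.I * ((v k : ℝ) : ℂ))
        * (-(Complex.I/2) * ((∑ r, n k r : ℝ) : ℂ) - ((∑ r, e k r * lr r : ℝ) : ℂ)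
            + ((p k : ℝ) : ℂ)))
    = -Complex.I * (-(Complex.I/2) * ((∑ r, ∑ k,
          (e r k * d k r + u k * n' k r - d r k * e k r - v k * n k r) : ℝ) : ℂ)
        - ((∑ r, (∑ k, (u k * d k r - v k * e k r)) * lr r : ℝ) : ℂ)
        + ((∑ k, (u k * q k - v k * p k) : ℝ) : ℂ)) := by
  push_cast
  exact scalarE3 (fun k => (u k : ℂ)) (fun k => (v k : ℂ)) (fun k => (p k : ℂ))
    (fun k => (q k : ℂ)) (fun k => (lr k : ℂ))
    (fun k r => (e k r : ℂ)) (fun k r => (d k r : ℂ))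
    (fun k r => (n k r : ℂ)) (fun k r => (n' k r : ℂ))

end Aux

/-- The Dirac condition `[f̂, f̂'] = −i \widehat{\{f,f'\}}` for the quantization of
functions affine in the action variables: with
`Aʳ = aᵏ∂ₖa'ʳ − a'ᵏ∂ₖaʳ` and `B = aᵏ∂ₖb' − a'ᵏ∂ₖb` one has
`{f, f'} = Aʳ Iᵣ + B` and `[f̂, f̂'] ρ = −i (AI + B)^^ ρ`. -/
theorem dirac_condition {m : ℕ} (lam : Fin m → ℝ)
    (a a' : (Fin m → ℝ) → Fin m → ℝ) (b b' : (Fin m → ℝ) → ℝ)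
    (ha : ContDiff ℝ (⊤ : ℕ∞) a) (hb : ContDiff ℝ (⊤ : ℕ∞) b)
    (ha' : ContDiff ℝ (⊤ : ℕ∞) a') (hb' : ContDiff ℝ (⊤ : ℕ∞) b')
    (hpa : OnTorus a) (hpb : OnTorus b) (hpa' : OnTorus a') (hpb' : OnTorus b')
    (A : (Fin m → ℝ) → Fin m → ℝ) (B : (Fin m → ℝ) → ℝ)
    (hA : ∀ φ r, A φ r = ∑ k, (a φ k * pdR k (fun ψ => a' ψ r) φ
      - a' φ k * pdR k (fun ψ => a ψ r) φ))
    (hB : ∀ φ, B φ = ∑ k, (a φ k * pdR k b' φ - a' φ k * pdR k b φ)) :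
    (∀ x : Pann m,
      bracketP (affineAction a b) (affineAction a' b') x = affineAction A B x) ∧
    (∀ ρ : (Fin m → ℝ) → ℂ, ContDiff ℝ (⊤ : ℕ∞) ρ → ∀ φ : Fin m → ℝ,
      Qop lam a b (Qop lam a' b' ρ) φ - Qop lam a' b' (Qop lam a b ρ) φ
        = -Complex.I * Qop lam A B ρ φ) := by
  constructor
  · -- part 1
    intro x
    have step1 : bracketP (affineAction a b) (affineAction a' b') x
        = ∑ k, ((∑ r, (a x.1 k * pdR k (fun ψ => a' ψ r) x.1
              - a' x.1 k * pdR k (fun ψ => a ψ r) x.1) * x.2 r)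
            + (a x.1 k * pdR k b' x.1 - a' x.1 k * pdR k b x.1)) := by
      unfold bracketP
      apply Finset.sum_congr rfl
      intro k _
      rw [fd_affine_I a b ha hb, fd_affine_phi a b ha hb,
          fd_affine_I a' b' ha' hb', fd_affine_phi a' b' ha' hb']
      have hU : (∑ r, (a x.1 k * pdR k (fun ψ => a' ψ r) x.1
              - a' x.1 k * pdR k (fun ψ => a ψ r) x.1) * x.2 r)
          = a x.1 k * (∑ r, pdR k (fun ψ => a' ψ r) x.1 * x.2 r)
            - a' x.1 k * (∑ r, pdR k (fun ψ => a ψ r) x.1 * x.2 r) := by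
        simp only [sub_mul, Finset.sum_sub_distrib, Finset.mul_sum, mul_assoc]
      rw [hU]; ring
    rw [step1, Finset.sum_add_distrib]
    unfold affineAction
    congr 1
    · rw [Finset.sum_comm]
      apply Finset.sum_congr rfl
      intro r _
      rw [hA, Finset.sum_mul]
    · rw [hB]
  · -- part 2
    intro ρ hρ φ
    set w : Fin m → (Fin m → ℝ) → ℂ :=
      fun k ψ => -Complex.I * ((a ψ k : ℝ) : ℂ) with hw_def
    set w' : Fin m → (Fin m → ℝ) → ℂ :=
      fun k ψ => -Complex.I * ((a' ψ k : ℝ) : ℂ) with hw'_def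
    set c : (Fin m → ℝ) → ℂ := fun ψ =>
      -(Complex.I/2) * ((∑ r, pdR r (fun x => a x r) ψ : ℝ) : ℂ)
        - ((∑ r, a ψ r * lam r : ℝ) : ℂ) + ((b ψ : ℝ) : ℂ) with hc_def
    set c' : (Fin m → ℝ) → ℂ := fun ψ =>
      -(Complex.I/2) * ((∑ r, pdR r (fun x => a' x r) ψ : ℝ) : ℂ)
        - ((∑ r, a' ψ r * lam r : ℝ) : ℂ) + ((b' ψ : ℝ) : ℂ) with hc'_def
    -- smoothness
    have hwS : ∀ k, ContDiff ℝ (⊤ : ℕ∞) (w k) :=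
      fun k => contDiff_const.mul (cdC_cast (cd_coord ha k))
    have hw'S : ∀ k, ContDiff ℝ (⊤ : ℕ∞) (w' k) :=
      fun k => contDiff_const.mul (cdC_cast (cd_coord ha' k))
    have hSa : ContDiff ℝ (⊤ : ℕ∞) (fun ψ => ∑ r, pdR r (fun x => a x r) ψ) :=
      ContDiff.sum fun r _ => cd_pdR (cd_coord ha r) r
    have hSa' : ContDiff ℝ (⊤ : ℕ∞) (fun ψ => ∑ r, pdR r (fun x => a' x r) ψ) :=
      ContDiff.sum fun r _ => cd_pdR (cd_coord ha' r) r
    have hTa : ContDiff ℝ (⊤ : ℕ∞) (fun ψ => ∑ r, a ψ r * lam r) :=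
      ContDiff.sum fun r _ => (cd_coord ha r).mul contDiff_const
    have hTa' : ContDiff ℝ (⊤ : ℕ∞) (fun ψ => ∑ r, a' ψ r * lam r) :=
      ContDiff.sum fun r _ => (cd_coord ha' r).mul contDiff_const
    have hcS : ContDiff ℝ (⊤ : ℕ∞) c := by
      rw [hc_def]
      exact ((contDiff_const.mul (cdC_cast hSa)).sub (cdC_cast hTa)).add (cdC_cast hb)
    have hc'S : ContDiff ℝ (⊤ : ℕ∞) c' := by
      rw [hc'_def]
      exact ((contDiff_const.mul (cdC_cast hSa')).sub (cdC_cast hTa')).add (cdC_cast hb')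
    -- Qop = Lop
    have hQL : ∀ σ : (Fin m → ℝ) → ℂ, Qop lam a b σ = Lop w c σ := by
      intro σ; funext ψ
      simp only [Qop, Lop, hw_def, hc_def]
      ring
    have hQL' : ∀ σ : (Fin m → ℝ) → ℂ, Qop lam a' b' σ = Lop w' c' σ := by
      intro σ; funext ψ
      simp only [Qop, Lop, hw'_def, hc'_def]
      ring
    rw [hQL' ρ, hQL (Lop w' c' ρ), hQL ρ, hQL' (Lop w c ρ),
        comm_op hwS hcS hw'S hc'S hρ φ]
    -- evaluate derivatives of the coefficients
    have pdw : ∀ k r : Fin m, pdC k (w r) φ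
        = -Complex.I * ((pdR k (fun ψ => a ψ r) φ : ℝ) : ℂ) := by
      intro k r
      simp only [hw_def]
      rw [pdC_const_mul (-Complex.I) ((cdC_cast (cd_coord ha r)).differentiable (by simp) φ) k,
          pdC_ofReal ((cd_coord ha r).differentiable (by simp) φ) k]
    have pdw' : ∀ k r : Fin m, pdC k (w' r) φ
        = -Complex.I * ((pdR k (fun ψ => a' ψ r) φ : ℝ) : ℂ) := by
      intro k r
      simp only [hw'_def]
      rw [pdC_const_mul (-Complex.I) ((cdC_cast (cd_coord ha' r)).differentiable (by simp) φ) k,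
          pdC_ofReal ((cd_coord ha' r).differentiable (by simp) φ) k]
    have pdc_gen : ∀ (α : (Fin m → ℝ) → Fin m → ℝ) (β : (Fin m → ℝ) → ℝ)
        (hα : ContDiff ℝ (⊤ : ℕ∞) α) (hβ : ContDiff ℝ (⊤ : ℕ∞) β) (k : Fin m),
        pdC k (fun ψ => -(Complex.I/2) * ((∑ r, pdR r (fun x => α x r) ψ : ℝ) : ℂ)
          - ((∑ r, α ψ r * lam r : ℝ) : ℂ) + ((β ψ : ℝ) : ℂ)) φ
        = -(Complex.I/2) * ((∑ r, pdR k (pdR r (fun x => α x r)) φ : ℝ) : ℂ)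
          - ((∑ r, pdR k (fun ψ => α ψ r) φ * lam r : ℝ) : ℂ)
          + ((pdR k β φ : ℝ) : ℂ) := by
      intro α β hα hβ k
      have hS : ContDiff ℝ (⊤ : ℕ∞) (fun ψ => ∑ r, pdR r (fun x => α x r) ψ) :=
        ContDiff.sum fun r _ => cd_pdR (cd_coord hα r) r
      have hT : ContDiff ℝ (⊤ : ℕ∞) (fun ψ => ∑ r, α ψ r * lam r) :=
        ContDiff.sum fun r _ => (cd_coord hα r).mul contDiff_const
      have d1 : DifferentiableAt ℝ
          (fun ψ => -(Complex.I/2) * ((∑ r, pdR r (fun x => α x r) ψ : ℝ) : ℂ)) φ :=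
        (contDiff_const.mul (cdC_cast hS)).differentiable (by simp) φ
      have d2 : DifferentiableAt ℝ (fun ψ => ((∑ r, α ψ r * lam r : ℝ) : ℂ)) φ :=
        (cdC_cast hT).differentiable (by simp) φ
      have d3 : DifferentiableAt ℝ (fun ψ => ((β ψ : ℝ) : ℂ)) φ :=
        (cdC_cast hβ).differentiable (by simp) φ
      rw [pdC_add (d1.fun_sub d2) d3, pdC_sub d1 d2,
          pdC_const_mul (-(Complex.I/2)) ((cdC_cast hS).differentiable (by simp) φ) k,
          pdC_ofReal (hS.differentiable (by simp) φ) k,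
          pdC_ofReal (hT.differentiable (by simp) φ) k,
          pdC_ofReal (hβ.differentiable (by simp) φ) k,
          pdR_sum (fun r _ => (cd_pdR (cd_coord hα r) r).differentiable (by simp) φ) k,
          pdR_sum (fun r _ => ((cd_coord hα r).mul contDiff_const).differentiable (by simp) φ) k]
      have : ∀ r : Fin m, pdR k (fun ψ => α ψ r * lam r) φ
          = pdR k (fun ψ => α ψ r) φ * lam r :=
        fun r => pdR_mul_const (lam r) ((cd_coord hα r).differentiable (by simp) φ) k
      rw [Finset.sum_congr rfl fun r _ => this r]
    have pdc : ∀ k : Fin m, pdC k c φ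
        = -(Complex.I/2) * ((∑ r, pdR k (pdR r (fun x => a x r)) φ : ℝ) : ℂ)
          - ((∑ r, pdR k (fun ψ => a ψ r) φ * lam r : ℝ) : ℂ)
          + ((pdR k b φ : ℝ) : ℂ) := by
      intro k
      simp only [hc_def]
      exact pdc_gen a b ha hb k
    have pdc' : ∀ k : Fin m, pdC k c' φ
        = -(Complex.I/2) * ((∑ r, pdR k (pdR r (fun x => a' x r)) φ : ℝ) : ℂ)
          - ((∑ r, pdR k (fun ψ => a' ψ r) φ * lam r : ℝ) : ℂ)
          + ((pdR k b' φ : ℝ) : ℂ) := by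
      intro k
      simp only [hc'_def]
      exact pdc_gen a' b' ha' hb' k
    -- first order coefficient
    have hC1 : ∀ r : Fin m, (∑ k, (w k φ * pdC k (w' r) φ - w' k φ * pdC k (w r) φ))
        = -((A φ r : ℝ) : ℂ) := by
      intro r
      have hk : ∀ k : Fin m, w k φ * pdC k (w' r) φ - w' k φ * pdC k (w r) φ
          = -(((a φ k * pdR k (fun ψ => a' ψ r) φ
              - a' φ k * pdR k (fun ψ => a ψ r) φ : ℝ)) : ℂ) := by
        intro k
        rw [pdw k r, pdw' k r]
        simp only [hw_def, hw'_def]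
        push_cast
        linear_combination (((a φ k : ℝ) : ℂ) * ((pdR k (fun ψ => a' ψ r) φ : ℝ) : ℂ)
          - ((a' φ k : ℝ) : ℂ) * ((pdR k (fun ψ => a ψ r) φ : ℝ) : ℂ)) * Complex.I_sq
      rw [Finset.sum_congr rfl fun k _ => hk k, hA φ r]
      push_cast
      rw [Finset.sum_neg_distrib]
    -- zero order coefficient
    have hdA : ∀ r : Fin m, pdR r (fun ψ => A ψ r) φ
        = ∑ k, (pdR r (fun ψ => a ψ k) φ * pdR k (fun ψ => a' ψ r) φ
            + a φ k * pdR k (pdR r (fun ψ => a' ψ r)) φ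
            - pdR r (fun ψ => a' ψ k) φ * pdR k (fun ψ => a ψ r) φ
            - a' φ k * pdR k (pdR r (fun ψ => a ψ r)) φ) := by
      intro r
      have hfun : (fun ψ => A ψ r)
          = fun ψ => ∑ k, (a ψ k * pdR k (fun x => a' x r) ψ
              - a' ψ k * pdR k (fun x => a x r) ψ) := funext fun ψ => hA ψ r
      have dterm : ∀ k : Fin m, DifferentiableAt ℝ
          (fun ψ => a ψ k * pdR k (fun x => a' x r) ψ
            - a' ψ k * pdR k (fun x => a x r) ψ) φ :=
        fun k => (((cd_coord ha k).mul (cd_pdR (cd_coord ha' r) k)).sub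
          ((cd_coord ha' k).mul (cd_pdR (cd_coord ha r) k))).differentiable (by simp) φ
      rw [hfun, pdR_sum (fun k _ => dterm k) r]
      apply Finset.sum_congr rfl
      intro k _
      rw [pdR_sub (((cd_coord ha k).mul (cd_pdR (cd_coord ha' r) k)).differentiable (by simp) φ)
            (((cd_coord ha' k).mul (cd_pdR (cd_coord ha r) k)).differentiable (by simp) φ) r,
          pdR_mul ((cd_coord ha k).differentiable (by simp) φ)
            ((cd_pdR (cd_coord ha' r) k).differentiable (by simp) φ) r,
          pdR_mul ((cd_coord ha' k).differentiable (by simp) φ)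
            ((cd_pdR (cd_coord ha r) k).differentiable (by simp) φ) r,
          pdR_comm (cd_coord ha' r) r k φ, pdR_comm (cd_coord ha r) r k φ]
      ring
    have hC0 : (∑ k, (w k φ * pdC k c' φ - w' k φ * pdC k c φ))
        = -Complex.I * (-(Complex.I/2) * ((∑ r, pdR r (fun ψ => A ψ r) φ : ℝ) : ℂ)
            - ((∑ r, A φ r * lam r : ℝ) : ℂ) + ((B φ : ℝ) : ℂ)) := by
      have hk : ∀ k : Fin m, w k φ * pdC k c' φ - w' k φ * pdC k c φ
          = (-Complex.I * ((a φ k : ℝ) : ℂ))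
              * (-(Complex.I/2) * ((∑ r, pdR k (pdR r (fun x => a' x r)) φ : ℝ) : ℂ)
                - ((∑ r, pdR k (fun ψ => a' ψ r) φ * lam r : ℝ) : ℂ)
                + ((pdR k b' φ : ℝ) : ℂ))
            - (-Complex.I * ((a' φ k : ℝ) : ℂ))
              * (-(Complex.I/2) * ((∑ r, pdR k (pdR r (fun x => a x r)) φ : ℝ) : ℂ)
                - ((∑ r, pdR k (fun ψ => a ψ r) φ * lam r : ℝ) : ℂ)
                + ((pdR k b φ : ℝ) : ℂ)) := by
        intro k
        rw [pdc k, pdc' k]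
      rw [Finset.sum_congr rfl fun k _ => hk k,
          Finset.sum_congr rfl fun r (_ : r ∈ Finset.univ) => congrArg (· * lam r) (hA φ r),
          hB φ, Finset.sum_congr rfl fun r (_ : r ∈ Finset.univ) => hdA r]
      exact scalarE3' (fun k => a φ k) (fun k => a' φ k)
        (fun k => pdR k b φ) (fun k => pdR k b' φ) lam
        (fun k r => pdR k (fun ψ => a ψ r) φ) (fun k r => pdR k (fun ψ => a' ψ r) φ)
        (fun k r => pdR k (pdR r (fun x => a x r)) φ)
        (fun k r => pdR k (pdR r (fun x => a' x r)) φ)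
    -- assemble
    rw [Finset.sum_congr rfl fun r (_ : r ∈ Finset.univ) =>
          congrArg (· * pdC r ρ φ) (hC1 r), hC0]
    simp only [Qop]
    have hS : -Complex.I * (∑ r, -Complex.I * ((A φ r : ℝ) : ℂ) * pdC r ρ φ)
        = ∑ r, -((A φ r : ℝ) : ℂ) * pdC r ρ φ := by
      rw [Finset.mul_sum]
      exact Finset.sum_congr rfl fun r _ => by
        linear_combination (((A φ r : ℝ) : ℂ) * pdC r ρ φ) * Complex.I_sq
    linear_combination -hS
end
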